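/- Let m, n be non-negative integers and let V₁^{⊗m} ⊗ V₂^{⊗n} = ⊕_μ V_μ^{⊕a_μ} be the decomposition into irreducibles of SU(3), where V₁ is the standard representation and V₂ = ∧²V₁. Let ℵ(l₁,l₂) = l₂ω₁ + l₁ω₂ denote the dominant weight parametrized by (l₁,l₂) ∈ ℤ_{≥0}², where ω₁, ω₂ are the fundamental weights. Then for any real α > 0 and prime p, Σ_{l₁≥0, l₂≥0} a_{ℵ(l₁,l₂)} · p^{α(l₁+l₂)} ≤ (p^α + 1 + p^{−α})^{m+n}. -/

import Mathlib

/-! Evaluating formal characters at the positive point `e^μ ↦ t^(μ₁ + μ₂)`, `t = p^α`, is a ring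
homomorphism `ℤ[Λ] → ℝ`. It sends `χ₁` and `χ₂` to `t + 1 + t⁻¹`, and, since characters have
non-negative coefficients, it sends each irreducible character to at least the value
`t^(l₁ + l₂)` of its highest weight term. Evaluating the decomposition gives the bound. -/

open AddMonoidAlgebra

section PositiveEvaluation

variable {M A : Type*} [AddMonoid M] [CommRing A] [LinearOrder A] [IsStrictOrderedRing A]

theorem coeff_mul_le_lift_of_coeff_nonneg (F : Multiplicative M →* A) (hF : ∀ x, 0 ≤ F x)
    {χ : AddMonoidAlgebra ℤ M} (hχ : ∀ μ, 0 ≤ χ.coeff μ) (μ : M) :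
    (χ.coeff μ : A) * F (.ofAdd μ) ≤ lift ℤ A M F χ := by
  have hterm : ∀ ν, 0 ≤ (χ.coeff ν : A) * F (.ofAdd ν) :=
    fun ν => mul_nonneg (Int.cast_nonneg_iff.mpr (hχ ν)) (hF _)
  rw [lift_apply', Finsupp.sum]
  by_cases hμ : μ ∈ χ.coeff.support
  · exact Finset.single_le_sum (f := fun ν => (χ.coeff ν : A) * F (.ofAdd ν))
      (fun ν _ => hterm ν) hμ
  · rw [Finsupp.notMem_support_iff.mp hμ, Int.cast_zero, zero_mul]
    exact Finset.sum_nonneg fun ν _ => hterm ν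

theorem sum_mul_le_lift_sum_smul {ι : Type*} (F : Multiplicative M →* A) (hF : ∀ x, 0 ≤ F x)
    (χ : ι → AddMonoidAlgebra ℤ M) (hw : ι → M) (hχ_hw : ∀ i, (χ i).coeff (hw i) = 1)
    (hχ_nonneg : ∀ i μ, 0 ≤ (χ i).coeff μ) (a : ι →₀ ℕ) :
    a.sum (fun i c => (c : A) * F (.ofAdd (hw i)))
      ≤ lift ℤ A M F (a.sum fun i c => (c : ℤ) • χ i) := by
  rw [map_finsuppSum]
  refine Finset.sum_le_sum fun i _ => ?_
  dsimp only
  rw [map_zsmul, zsmul_eq_mul, Int.cast_natCast]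
  refine mul_le_mul_of_nonneg_left ?_ (Nat.cast_nonneg _)
  simpa [hχ_hw i] using coeff_mul_le_lift_of_coeff_nonneg F hF (hχ_nonneg i) (hw i)

end PositiveEvaluation

def zpowHeightHom {M K : Type*} [AddMonoid M] [DivisionRing K] (t : Kˣ) (h : M →+ ℤ) :
    Multiplicative M →* K :=
  (Units.coeHom K).comp ((zpowersHom Kˣ t).comp (AddMonoidHom.toMultiplicative h))

@[simp]
theorem zpowHeightHom_ofAdd {M K : Type*} [AddMonoid M] [DivisionRing K] (t : Kˣ) (h : M →+ ℤ)
    (μ : M) : zpowHeightHom t h (.ofAdd μ) = (t : K) ^ h μ := by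
  simp [zpowHeightHom]

theorem su3_multiplicity_sum_bound_general
    (p : ℕ) (hp : p.Prime) (α : ℝ) (m n : ℕ)
    (χ₁ χ₂ : AddMonoidAlgebra ℤ (ℤ × ℤ))
    (h1 : χ₁ = AddMonoidAlgebra.single ((1 : ℤ), (0 : ℤ)) 1 + AddMonoidAlgebra.single ((-1 : ℤ), (1 : ℤ)) 1
      + AddMonoidAlgebra.single ((0 : ℤ), (-1 : ℤ)) 1)
    (h2 : χ₂ = AddMonoidAlgebra.single ((0 : ℤ), (1 : ℤ)) 1 + AddMonoidAlgebra.single ((1 : ℤ), (-1 : ℤ)) 1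
      + AddMonoidAlgebra.single ((-1 : ℤ), (0 : ℤ)) 1)
    (χW : ℕ × ℕ → AddMonoidAlgebra ℤ (ℤ × ℤ))
    (hχW_hw : ∀ l : ℕ × ℕ, (χW l).coeff ((l.2 : ℤ), (l.1 : ℤ)) = 1)
    (hχW_nonneg : ∀ (l : ℕ × ℕ) (μ : ℤ × ℤ), 0 ≤ (χW l).coeff μ)
    (a : (ℕ × ℕ) →₀ ℕ)
    (hdecomp : χ₁ ^ m * χ₂ ^ n = a.sum (fun l c => (c : ℤ) • χW l)) :
    a.sum (fun l c => (c : ℝ) * ((p : ℝ) ^ α) ^ (l.1 + l.2))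
      ≤ ((p : ℝ) ^ α + 1 + (p : ℝ) ^ (-α)) ^ (m + n) := by
  have hp0 : (0 : ℝ) < p := by exact_mod_cast hp.pos
  have ht : (0 : ℝ) < (p : ℝ) ^ α := Real.rpow_pos_of_pos hp0 α
  let F := zpowHeightHom (Units.mk0 _ ht.ne') (AddMonoidHom.fst ℤ ℤ + AddMonoidHom.snd ℤ ℤ)
  have hF : ∀ x, 0 ≤ F x := fun x => by
    simpa [F, zpowHeightHom] using (zpow_pos ht _).le
  have hχ₁ : lift ℤ ℝ _ F χ₁ = (p : ℝ) ^ α + 1 + ((p : ℝ) ^ α)⁻¹ := by simp [F, h1]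
  have hχ₂ : lift ℤ ℝ _ F χ₂ = (p : ℝ) ^ α + 1 + ((p : ℝ) ^ α)⁻¹ := by simp [F, h2]
  calc a.sum (fun l c => (c : ℝ) * ((p : ℝ) ^ α) ^ (l.1 + l.2))
      = a.sum (fun l c => (c : ℝ) * F (.ofAdd ((l.2 : ℤ), (l.1 : ℤ)))) := by
        refine Finsupp.sum_congr fun l _ => ?_
        simp [F, add_comm, ← zpow_natCast]
    _ ≤ lift ℤ ℝ _ F (a.sum fun l c => (c : ℤ) • χW l) :=
        sum_mul_le_lift_sum_smul F hF χW _ hχW_hw hχW_nonneg a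
    _ = _ := by
        rw [← hdecomp, map_mul, map_pow, map_pow, hχ₁, hχ₂, ← pow_add, Real.rpow_neg hp0.le]

/-- Let V₁^{⊗m} ⊗ V₂^{⊗n} = ⊕_μ V_μ^{⊕a_μ} be the decomposition into
irreducibles of SU(3), expressed on the level of formal characters in the group ring
ℤ[Λ] of the weight lattice Λ ≅ ℤ² (coordinates in the fundamental weights ω₁, ω₂):
χ₁^m χ₂^n = Σ_{(l₁,l₂)} a(l₁,l₂) · χ_{ℵ(l₁,l₂)}, where ℵ(l₁,l₂) = l₂ω₁ + l₁ω₂ and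
χ_{ℵ(l₁,l₂)} is the irreducible character of highest weight ℵ(l₁,l₂) (whose highest
weight coefficient is 1 and all of whose coefficients are non-negative).
Then for a prime p and real α > 0,
Σ_{l₁,l₂ ≥ 0} a(l₁,l₂) p^{α(l₁+l₂)} ≤ (p^α + 1 + p^{-α})^{m+n}. -/
theorem su3_multiplicity_sum_bound
    (p : ℕ) (hp : p.Prime) (α : ℝ) (hα : 0 < α) (m n : ℕ)
    (χ₁ χ₂ : AddMonoidAlgebra ℤ (ℤ × ℤ))
    (h1 : χ₁ = AddMonoidAlgebra.single ((1 : ℤ), (0 : ℤ)) 1 + AddMonoidAlgebra.single ((-1 : ℤ), (1 : ℤ)) 1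
      + AddMonoidAlgebra.single ((0 : ℤ), (-1 : ℤ)) 1)
    (h2 : χ₂ = AddMonoidAlgebra.single ((0 : ℤ), (1 : ℤ)) 1 + AddMonoidAlgebra.single ((1 : ℤ), (-1 : ℤ)) 1
      + AddMonoidAlgebra.single ((-1 : ℤ), (0 : ℤ)) 1)
    (χW : ℕ × ℕ → AddMonoidAlgebra ℤ (ℤ × ℤ))
    (hχW_hw : ∀ l : ℕ × ℕ, (χW l).coeff ((l.2 : ℤ), (l.1 : ℤ)) = 1)
    (hχW_nonneg : ∀ (l : ℕ × ℕ) (μ : ℤ × ℤ), 0 ≤ (χW l).coeff μ)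
    (a : (ℕ × ℕ) →₀ ℕ)
    (hdecomp : χ₁ ^ m * χ₂ ^ n = a.sum (fun l c => (c : ℤ) • χW l)) :
    a.sum (fun l c => (c : ℝ) * ((p : ℝ) ^ α) ^ (l.1 + l.2))
      ≤ ((p : ℝ) ^ α + 1 + (p : ℝ) ^ (-α)) ^ (m + n) :=
  su3_multiplicity_sum_bound_general p hp α m n χ₁ χ₂ h1 h2 χW hχW_hw hχW_nonneg a hdecomp
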